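/- A set A computes a fixed point free function (a total f ≤_T A with W_{f(n)} ≠ W_n for all n) if and only if A computes a diagonally noncomputable function (a total g ≤_T A with g(e) ≠ φ_e(e) whenever φ_e(e) converges). -/

import Mathlib

open Nat.Partrec (Code)

/-- The `e`-th partial computable function, via the standard numbering of codes. -/
def phi (e : ℕ) : ℕ →. ℕ := (Denumerable.ofNat Code e).eval

/-- `W e` is the domain of the `e`-th partial computable function. -/
def W (e : ℕ) : Set ℕ := {n | (phi e n).Dom}

/-- The halting set ∅'. -/
def K0 : Set ℕ := {e | (phi e e).Dom}

/-- Characteristic function of a set of naturals. -/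
noncomputable def chi (A : Set ℕ) : ℕ → ℕ := A.indicator 1

/-- Partial recursiveness relative to an oracle `O : ℕ → ℕ`. -/
inductive RecursiveIn' (O : ℕ → ℕ) : (ℕ →. ℕ) → Prop
  | zero : RecursiveIn' O (pure 0)
  | succ : RecursiveIn' O Nat.succ
  | left : RecursiveIn' O fun n => (Nat.unpair n).1
  | right : RecursiveIn' O fun n => (Nat.unpair n).2
  | oracle : RecursiveIn' O fun n => Part.some (O n)
  | pair {f g} : RecursiveIn' O f → RecursiveIn' O g →
      RecursiveIn' O fun n => Nat.pair <$> f n <*> g n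
  | comp {f g} : RecursiveIn' O f → RecursiveIn' O g →
      RecursiveIn' O fun n => g n >>= f
  | prec {f g} : RecursiveIn' O f → RecursiveIn' O g →
      RecursiveIn' O (Nat.unpaired fun a n =>
        n.rec (f a) fun y IH => do
          let i ← IH
          g (Nat.pair a (Nat.pair y i)))
  | rfind {f} : RecursiveIn' O f →
      RecursiveIn' O fun a =>
        Nat.rfind fun n => (fun m => m = 0) <$> f (Nat.pair a n)

/-- A total function `f` is Turing reducible to the set `A`. -/
def FuncRecIn (A : Set ℕ) (f : ℕ → ℕ) : Prop :=
  RecursiveIn' (chi A) fun n => Part.some (f n)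

/-- A binary total function `h` is Turing reducible to the set `A`. -/
def Func2RecIn (A : Set ℕ) (h : ℕ → ℕ → ℕ) : Prop :=
  RecursiveIn' (chi A) fun n => Part.some (h (Nat.unpair n).1 (Nat.unpair n).2)

/-- Turing reducibility between sets of naturals. -/
def SetRecIn (A B : Set ℕ) : Prop := RecursiveIn' (chi B) fun n => Part.some (chi A n)

/-- `A` is computably enumerable. -/
def CE (A : Set ℕ) : Prop := REPred (· ∈ A)

/-- Codes for oracle machines. -/
inductive OCode : Type
  | zero | succ | left | right | oracle
  | pair (cf cg : OCode)
  | comp (cf cg : OCode)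
  | prec (cf cg : OCode)
  | rfind' (cf : OCode)

/-- Evaluation of oracle codes relative to an oracle `O`. -/
def OCode.evalo (O : ℕ → ℕ) : OCode → ℕ →. ℕ
  | .zero => pure 0
  | .succ => Nat.succ
  | .left => fun n => Part.some (Nat.unpair n).1
  | .right => fun n => Part.some (Nat.unpair n).2
  | .oracle => fun n => Part.some (O n)
  | .pair cf cg => fun n => Nat.pair <$> evalo O cf n <*> evalo O cg n
  | .comp cf cg => fun n => evalo O cg n >>= evalo O cf
  | .prec cf cg => Nat.unpaired fun a n =>
      n.rec (evalo O cf a) fun y IH => do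
        let i ← IH
        evalo O cg (Nat.pair a (Nat.pair y i))
  | .rfind' cf => Nat.unpaired fun a m =>
      (Nat.rfind fun n => (fun x => x = 0) <$> evalo O cf (Nat.pair a (n + m))).map (· + m)

/-- A standard numbering of oracle codes. -/
def OCode.ofNat : ℕ → OCode
  | 0 => .zero
  | 1 => .succ
  | 2 => .left
  | 3 => .right
  | 4 => .oracle
  | n + 5 =>
    let m := n.div2.div2
    have hm : m < n + 5 := by
      simp only [m, Nat.div2_val]
      exact lt_of_le_of_lt (le_trans (Nat.div_le_self _ _) (Nat.div_le_self _ _))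
        (by omega)
    have _m1 : m.unpair.1 < n + 5 := lt_of_le_of_lt m.unpair_left_le hm
    have _m2 : m.unpair.2 < n + 5 := lt_of_le_of_lt m.unpair_right_le hm
    match n.bodd, n.div2.bodd with
    | false, false => .pair (ofNat m.unpair.1) (ofNat m.unpair.2)
    | false, true  => .comp (ofNat m.unpair.1) (ofNat m.unpair.2)
    | true , false => .prec (ofNat m.unpair.1) (ofNat m.unpair.2)
    | true , true  => .rfind' (ofNat m)
decreasing_by
  all_goals
    have h1 := Nat.unpair_left_le n.div2.div2
    have h2 := Nat.unpair_right_le n.div2.div2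
    simp only [Nat.div2_val] at *
    omega

/-- The Turing jump of an oracle `O : ℕ → ℕ`. -/
def jump (O : ℕ → ℕ) : Set ℕ := {e | (OCode.evalo O (OCode.ofNat e) e).Dom}

/-- A binary partial function `δ` is FPF⁺. -/
def FPFplus (δ : ℕ → ℕ →. ℕ) : Prop :=
  ∀ g : ℕ → ℕ, Computable g → ∃ n, ∀ a ∈ δ n (g n), phi (g n) ≠ phi a

/-! An FPF function `f` yields a DNC function `e ↦ f (h e)`, where `φ_{h e} = φ_{φ_e(e)}`: if
`φ_e(e) = f (h e)` then `W_{h e} = W_{f (h e)}`, contradicting fixed point freeness. Conversely a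
DNC function `g` yields an FPF function `n ↦ c (g (k n))`, where `W_{c m} = {m}` and `φ_{k n}` is the
constant function searching `W_n` for an element: if `W_n = {g (k n)}` the search returns exactly
`g (k n)`, so `φ_{k n}(k n) = g (k n)`. -/

open Nat.Partrec.Code

def IsFPF (f : ℕ → ℕ) : Prop := ∀ n, W (f n) ≠ W n

def IsDNC (g : ℕ → ℕ) : Prop := ∀ e, g e ∉ phi e e

theorem RecursiveIn'.of_partrec (O : ℕ → ℕ) {f : ℕ →. ℕ} (hf : Nat.Partrec f) :
    RecursiveIn' O f := by
  induction hf with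
  | zero => exact .zero
  | succ => exact .succ
  | left => exact .left
  | right => exact .right
  | pair _ _ ihf ihg => exact .pair ihf ihg
  | comp _ _ ihf ihg => exact .comp ihf ihg
  | prec _ _ ihf ihg => exact .prec ihf ihg
  | rfind _ ihf => exact .rfind ihf

theorem FuncRecIn.of_computable {A : Set ℕ} {f : ℕ → ℕ} (hf : Computable f) : FuncRecIn A f :=
  RecursiveIn'.of_partrec _ (Partrec.nat_iff.mp hf)

theorem FuncRecIn.comp {A : Set ℕ} {g h : ℕ → ℕ} (hg : FuncRecIn A g) (hh : FuncRecIn A h) :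
    FuncRecIn A (g ∘ h) := by
  simpa [FuncRecIn] using RecursiveIn'.comp hg hh

theorem partrec₂_phi : Partrec₂ phi :=
  eval_part.comp ((Computable.ofNat Code).comp .fst) .snd

theorem exists_computable_phi_eq {F : ℕ → ℕ →. ℕ} (hF : Partrec₂ F) :
    ∃ s : ℕ → ℕ, Computable s ∧ ∀ a x, phi (s a) x = F a x := by
  obtain ⟨c, hc⟩ := exists_code.1 <| Partrec.nat_iff.1 <|
    hF.comp (Computable.fst.comp .unpair) (Computable.snd.comp .unpair)
  refine ⟨fun a => Encodable.encode (curry c a),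
    (Primrec.encode.comp (primrec₂_curry.comp (.const c) .id)).to_comp, fun a x => ?_⟩
  simp [phi, eval_curry, hc]

theorem exists_computable_W_eq_singleton : ∃ c : ℕ → ℕ, Computable c ∧ ∀ m, W (c m) = {m} := by
  have hF : Partrec₂ fun (m x : ℕ) => cond (x = m) (Part.some 0) Part.none :=
    Partrec.cond (Primrec.eq.comp .snd .fst).decide.to_comp (Partrec.const' _) Partrec.none
  obtain ⟨c, hc, hphi⟩ := exists_computable_phi_eq hF
  refine ⟨c, hc, fun m => Set.ext fun x => ?_⟩
  by_cases hx : x = m <;> simp [W, hphi, hx]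

noncomputable def findW (n : ℕ) : Part ℕ :=
  Nat.rfindOpt fun p => (evaln p.unpair.2 (Denumerable.ofNat Code n) p.unpair.1).map
    fun _ => p.unpair.1

theorem partrec_findW : Partrec findW := by
  have hx : Primrec fun q : ℕ × ℕ => q.2.unpair.1 :=
    Primrec.fst.comp (Primrec.unpair.comp .snd)
  have hs : Primrec fun q : ℕ × ℕ => q.2.unpair.2 :=
    Primrec.snd.comp (Primrec.unpair.comp .snd)
  have hevaln : Primrec fun q : ℕ × ℕ =>
      evaln q.2.unpair.2 (Denumerable.ofNat Code q.1) q.2.unpair.1 :=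
    primrec_evaln.comp ((hs.pair ((Primrec.ofNat Code).comp .fst)).pair hx)
  exact Partrec.rfindOpt (Primrec.option_map hevaln (hx.comp .fst).to₂).to_comp

theorem mem_W_of_mem_findW {n x : ℕ} (hx : x ∈ findW n) : x ∈ W n := by
  obtain ⟨p, hp⟩ := Nat.rfindOpt_spec hx
  simp only [Option.mem_def, Option.map_eq_some_iff] at hp
  obtain ⟨v, hv, rfl⟩ := hp
  exact Part.dom_iff_mem.2 ⟨v, evaln_sound hv⟩

theorem findW_dom_of_mem_W {n x : ℕ} (hx : x ∈ W n) : (findW n).Dom := by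
  obtain ⟨v, hv⟩ := Part.dom_iff_mem.1 hx
  obtain ⟨s, hs⟩ := evaln_complete.1 hv
  refine Nat.rfindOpt_dom.2 ⟨Nat.pair x s, x, ?_⟩
  simp [Option.mem_def.1 hs]

theorem findW_eq_some_of_W_eq_singleton {n m : ℕ} (hW : W n = {m}) : findW n = Part.some m := by
  have hdom : (findW n).Dom := findW_dom_of_mem_W (hW ▸ Set.mem_singleton m)
  have hmem : (findW n).get hdom ∈ ({m} : Set ℕ) := hW ▸ mem_W_of_mem_findW (Part.get_mem hdom)
  exact Part.eq_some_iff.2 (hmem ▸ Part.get_mem hdom)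

theorem exists_computable_isDNC_comp_of_isFPF :
    ∃ h : ℕ → ℕ, Computable h ∧ ∀ f, IsFPF f → IsDNC (f ∘ h) := by
  have hF : Partrec₂ fun (e x : ℕ) => (phi e e).bind fun v => phi v x :=
    (partrec₂_phi.comp .fst .fst).bind (partrec₂_phi.comp .snd (Computable.snd.comp .fst)).to₂
  obtain ⟨h, hh, hphi⟩ := exists_computable_phi_eq hF
  refine ⟨h, hh, fun f hf e he => hf (h e) ?_⟩
  have hee : phi e e = Part.some (f (h e)) := Part.eq_some_iff.2 he
  ext x
  simp [W, hphi, hee]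

theorem exists_computable_isFPF_comp_of_isDNC :
    ∃ c k : ℕ → ℕ, Computable c ∧ Computable k ∧ ∀ g, IsDNC g → IsFPF (c ∘ g ∘ k) := by
  obtain ⟨c, hc, hcW⟩ := exists_computable_W_eq_singleton
  obtain ⟨k, hk, hphi⟩ := exists_computable_phi_eq (F := fun n _ => findW n)
    (partrec_findW.comp .fst).to₂
  refine ⟨c, k, hc, hk, fun g hg n hW => hg (k n) ?_⟩
  have hWn : W n = {g (k n)} := hW ▸ hcW _
  rw [hphi, findW_eq_some_of_W_eq_singleton hWn]
  exact Part.mem_some _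

/-- A set computes an FPF function iff it computes a DNC function. -/
theorem fpf_iff_dnc (A : Set ℕ) :
    (∃ f : ℕ → ℕ, FuncRecIn A f ∧ ∀ n, W (f n) ≠ W n) ↔
    (∃ g : ℕ → ℕ, FuncRecIn A g ∧ ∀ e, (g e : ℕ) ∉ phi e e) := by
  constructor
  · rintro ⟨f, hfA, hf⟩
    obtain ⟨h, hh, hdnc⟩ := exists_computable_isDNC_comp_of_isFPF
    exact ⟨f ∘ h, hfA.comp (.of_computable hh), hdnc f hf⟩
  · rintro ⟨g, hgA, hg⟩
    obtain ⟨c, k, hc, hk, hfpf⟩ := exists_computable_isFPF_comp_of_isDNC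
    exact ⟨c ∘ g ∘ k, (FuncRecIn.of_computable hc).comp (hgA.comp (.of_computable hk)),
      hfpf g hg⟩
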